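/- Let W₁, …, Wₘ be nonempty sets given by SDP representations as in the context, and let 𝒞 be the set defined there. If every Wₖ is bounded, then 𝒞 = conv(⋃_{k=1}^m Wₖ). -/

import Mathlib

open MvPolynomial Metric Set Pointwise Filter

noncomputable section

/-- `ℝⁿ` with the Euclidean norm. -/
abbrev Rn (n : ℕ) : Type := EuclideanSpace ℝ (Fin n)

/-- A set `S ⊆ ℝⁿ` is SDP representable if it is the projection of a spectrahedron:
there are symmetric matrices `A₀, A i, B j` with
`S = { x | ∃ u, A₀ + Σ xᵢ Aᵢ + Σ uⱼ Bⱼ ⪰ 0 }`. -/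
def IsSDPRepresentable {n : ℕ} (S : Set (Rn n)) : Prop :=
  ∃ (N d : ℕ) (A₀ : Matrix (Fin d) (Fin d) ℝ)
    (A : Fin n → Matrix (Fin d) (Fin d) ℝ) (B : Fin N → Matrix (Fin d) (Fin d) ℝ),
    A₀.IsSymm ∧ (∀ i, (A i).IsSymm) ∧ (∀ j, (B j).IsSymm) ∧
    S = {x : Rn n | ∃ u : Fin N → ℝ,
      (A₀ + ∑ i, x i • A i + ∑ j, u j • B j).PosSemidef}

/-- Evaluation of a polynomial at a point of `ℝⁿ`. -/
def peval {n : ℕ} (g : MvPolynomial (Fin n) ℝ) (x : Rn n) : ℝ :=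
  MvPolynomial.eval (fun i => x i) g

/-- The gradient `∇g(u)` of a polynomial. -/
def pgrad {n : ℕ} (g : MvPolynomial (Fin n) ℝ) (u : Rn n) : Fin n → ℝ :=
  fun i => MvPolynomial.eval (fun j => u j) (MvPolynomial.pderiv i g)

/-- The Hessian `∇²g(u)` of a polynomial. -/
def phess {n : ℕ} (g : MvPolynomial (Fin n) ℝ) (u : Rn n) : Matrix (Fin n) (Fin n) ℝ :=
  Matrix.of fun i j =>
    MvPolynomial.eval (fun k => u k) (MvPolynomial.pderiv i (MvPolynomial.pderiv j g))

/-- A polynomial `g` is sos-concave if `-∇²g(x) = W(x)ᵀ W(x)` for some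
(possibly nonsquare) matrix polynomial `W`. -/
def SosConcave {n : ℕ} (g : MvPolynomial (Fin n) ℝ) : Prop :=
  ∃ (k : ℕ) (W : Fin k → Fin n → MvPolynomial (Fin n) ℝ),
    ∀ i j, - MvPolynomial.pderiv i (MvPolynomial.pderiv j g) = ∑ l, W l i * W l j

/-- `g` is quasi-concave at `u` : `-vᵀ∇²g(u)v ≥ 0` for every `v` with `∇g(u)ᵀv = 0`. -/
def QuasiConcaveAt {n : ℕ} (g : MvPolynomial (Fin n) ℝ) (u : Rn n) : Prop :=
  ∀ v : Fin n → ℝ, (∑ i, pgrad g u i * v i) = 0 →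
    0 ≤ -(∑ i, ∑ j, v i * phess g u i j * v j)

/-- `g` is strictly quasi-concave at `u` : if `∇g(u) ≠ 0` then `-vᵀ∇²g(u)v > 0`
for all nonzero `v ⊥ ∇g(u)`; if `∇g(u) = 0` then `-∇²g(u)` is positive definite. -/
def StrictlyQuasiConcaveAt {n : ℕ} (g : MvPolynomial (Fin n) ℝ) (u : Rn n) : Prop :=
  (pgrad g u ≠ 0 ∧ ∀ v : Fin n → ℝ, v ≠ 0 → (∑ i, pgrad g u i * v i) = 0 →
      0 < -(∑ i, ∑ j, v i * phess g u i j * v j)) ∨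
  (pgrad g u = 0 ∧ (-(phess g u)).PosDef)

/-- The convex boundary `∂_c T` : points of `T` minimizing some unit linear functional. -/
def convexBoundary {n : ℕ} (T : Set (Rn n)) : Set (Rn n) :=
  {u ∈ T | ∃ l : Rn n, ‖l‖ = 1 ∧ ∀ x ∈ T, (∑ i, l i * u i) ≤ ∑ i, l i * x i}

/-- `v` is a nonsingular point of `∂T` (w.r.t. defining polynomials `g`):
exactly one defining polynomial vanishes at `v`, with nonvanishing gradient. -/
def IsNonsingularBoundaryPoint {n m : ℕ} (g : Fin m → MvPolynomial (Fin n) ℝ)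
    (T : Set (Rn n)) (v : Rn n) : Prop :=
  v ∈ frontier T ∧ ∃ i, peval (g i) v = 0 ∧ pgrad (g i) v ≠ 0 ∧
    ∀ j, peval (g j) v = 0 → j = i

/-- A polynomial is SOS if it is a finite sum of squares of polynomials. -/
def IsSOSPoly {n : ℕ} (p : MvPolynomial (Fin n) ℝ) : Prop :=
  ∃ (k : ℕ) (q : Fin k → MvPolynomial (Fin n) ℝ), p = ∑ i, (q i) ^ 2

/-- The polynomial `δ² - ‖x - u‖²`. -/
def ballPoly {n : ℕ} (u : Rn n) (δ : ℝ) : MvPolynomial (Fin n) ℝ :=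
  MvPolynomial.C (δ ^ 2) - ∑ i, (MvPolynomial.X i - MvPolynomial.C (u i)) ^ 2

/-- The family `h₁, …, h_{m₂}` extended by the ball polynomial `h_m(x) = δ² - ‖x-u‖²`. -/
def extFamily {n m2 : ℕ} (h : Fin m2 → MvPolynomial (Fin n) ℝ) (u : Rn n) (δ : ℝ) :
    Fin (m2 + 1) → MvPolynomial (Fin n) ℝ :=
  Fin.snoc h (ballPoly u δ)

/-- The positive definite Lagrange Hessian (PDLH) condition at `u` with radius `δu`,
for the set `T = {x | f(x) = 0, h(x) ≥ 0}`. -/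
def PDLHAt {n m1 m2 : ℕ} (f : Fin m1 → MvPolynomial (Fin n) ℝ)
    (h : Fin m2 → MvPolynomial (Fin n) ℝ) (T : Set (Rn n)) (u : Rn n) (δu : ℝ) : Prop :=
  ∀ l : Rn n, ‖l‖ = 1 → ∀ δ : ℝ, 0 < δ → δ ≤ δu →
    ∀ v ∈ T ∩ closedBall u δ,
      (∀ x ∈ T ∩ closedBall u δ, (∑ i, l i * v i) ≤ ∑ i, l i * x i) →
      ∃ (lam : Fin m1 → ℝ) (mu : Fin (m2 + 1) → ℝ),
        (∀ j, 0 ≤ mu j) ∧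
        (∀ j, mu j * peval (extFamily h u δ j) v = 0) ∧
        (∀ i, l i = (∑ k, lam k * pgrad (f k) v i) +
            ∑ j, mu j * pgrad (extFamily h u δ j) v i) ∧
        ∀ x ∈ closedBall u δ,
          (Matrix.of (fun i i' : Fin n =>
            -(∑ k, lam k * phess (f k) x i i') -
              ∑ j, mu j * phess (extFamily h u δ j) x i i')).PosDef

/-- `Z(g) ∩ ∂S` has strictly convex shape with respect to `S`. -/
def StrictlyConvexShape {n : ℕ} (g : MvPolynomial (Fin n) ℝ) (S : Set (Rn n)) : Prop :=
  ∃ Y U : Set (Rn n), IsOpen U ∧ Y = {x | peval g x = 0} ∩ U ∧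
    {x | peval g x = 0} ∩ frontier S ⊆ Y ∧
    (∀ p ∈ closure Y, pgrad g p ≠ 0) ∧
    ∀ p ∈ closure Y,
      (∃ ε : ℝ, (ε = 1 ∨ ε = -1) ∧
        ∀ q ∈ S ∪ closure Y, ε * (∑ i, pgrad g p i * (q i - p i)) ≤ 0) ∧
      ∀ q ∈ S ∪ closure Y, (∑ i, pgrad g p i * (q i - p i)) = 0 → q = p

/-- PSD is closed under addition. -/
lemma psd_add {d : ℕ} {M P : Matrix (Fin d) (Fin d) ℝ}
    (hM : M.PosSemidef) (hP : P.PosSemidef) : (M + P).PosSemidef := by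
  refine ⟨hM.1.add hP.1, fun x => ?_⟩
  have := add_nonneg (hM.2 x) (hP.2 x)
  simpa [Matrix.add_mulVec, dotProduct_add, mul_add, add_mul, Finsupp.sum_add] using this

/-- PSD is closed under nonnegative scaling. -/
lemma psd_smul {d : ℕ} {M : Matrix (Fin d) (Fin d) ℝ} {c : ℝ}
    (hM : M.PosSemidef) (hc : 0 ≤ c) : (c • M).PosSemidef := by
  constructor
  · have h1 := hM.1
    unfold Matrix.IsHermitian at h1 ⊢
    rw [Matrix.conjTranspose_smul, h1]
    norm_num
  · intro x
    have := mul_nonneg hc (hM.2 x)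
    simpa [Matrix.smul_mulVec, dotProduct_smul, smul_eq_mul, Finsupp.mul_sum, mul_assoc, mul_left_comm] using this

/-- Linearity identity used for convex combinations of SDP constraints. -/
lemma sdp_lin_comb {n N' d' : ℕ} (A₀ : Matrix (Fin d') (Fin d') ℝ)
    (B : Fin n → Matrix (Fin d') (Fin d') ℝ)
    (C : Fin N' → Matrix (Fin d') (Fin d') ℝ)
    (a b s t : ℝ) (x y : Fin n → ℝ) (u v : Fin N' → ℝ) :
    ((a * s + b * t) • A₀ + ∑ i, (a * x i + b * y i) • B i +
        ∑ j, (a * u j + b * v j) • C j)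
      = a • (s • A₀ + ∑ i, x i • B i + ∑ j, u j • C j)
        + b • (t • A₀ + ∑ i, y i • B i + ∑ j, v j • C j) := by
  simp only [smul_add, Finset.smul_sum, add_smul, smul_smul, Finset.sum_add_distrib]
  abel

/-- If the "SDP spectrahedron" is bounded and nonempty, a recession direction is zero. -/
lemma recession_zero {n N' d' : ℕ} (A₀ : Matrix (Fin d') (Fin d') ℝ)
    (B : Fin n → Matrix (Fin d') (Fin d') ℝ)
    (C : Fin N' → Matrix (Fin d') (Fin d') ℝ)
    (S : Set (Rn n))
    (hS : S = {x : Rn n | ∃ u : Fin N' → ℝ,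
      (A₀ + ∑ i, x i • B i + ∑ j, u j • C j).PosSemidef})
    (hbd : Bornology.IsBounded S) (hne : S.Nonempty)
    (x : Rn n) (u : Fin N' → ℝ)
    (hpsd : (∑ i, x i • B i + ∑ j, u j • C j).PosSemidef) : x = 0 := by
  obtain ⟨y, hy⟩ := hne
  rw [hS] at hy
  obtain ⟨v, hv⟩ := hy
  obtain ⟨R, hR⟩ := isBounded_iff_forall_norm_le.mp hbd
  by_contra hx
  have hxn : 0 < ‖x‖ := norm_pos_iff.mpr hx
  set t : ℝ := (|R| + ‖y‖ + 1) / ‖x‖ with ht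
  have ht0 : 0 ≤ t := by positivity
  have hmem : y + t • x ∈ S := by
    rw [hS]
    refine ⟨v + t • u, ?_⟩
    have heq : A₀ + ∑ i, (y + t • x) i • B i + ∑ j, (v + t • u) j • C j
        = (A₀ + ∑ i, y i • B i + ∑ j, v j • C j)
          + t • (∑ i, x i • B i + ∑ j, u j • C j) := by
      simp only [PiLp.add_apply, PiLp.smul_apply, Pi.add_apply, Pi.smul_apply,
        smul_eq_mul, add_smul, smul_smul, Finset.smul_sum, Finset.sum_add_distrib, smul_add]
      abel
    rw [heq]
    exact psd_add hv (psd_smul hpsd ht0)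
  have h1 : ‖y + t • x‖ ≤ |R| := (hR _ hmem).trans (le_abs_self R)
  have h2 : t * ‖x‖ - ‖y‖ ≤ ‖y + t • x‖ := by
    have := norm_add_le (y + t • x) (-y)
    simp only [add_neg_cancel_comm, norm_neg] at this
    have hts : ‖t • x‖ = t * ‖x‖ := by rw [norm_smul, Real.norm_eq_abs, abs_of_nonneg ht0]
    linarith [this, hts.le, hts.ge]
  have h3 : t * ‖x‖ = |R| + ‖y‖ + 1 := div_mul_cancel₀ _ hxn.ne'
  linarith

/-- if every `Wₖ` is bounded, then `𝒞 = conv(⋃ₖ Wₖ)`. -/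
theorem sdp_patch_eq_convexHull_union_of_bounded {n m : ℕ} (N d : Fin m → ℕ)
    (A : ∀ k, Matrix (Fin (d k)) (Fin (d k)) ℝ)
    (B : ∀ k, Fin n → Matrix (Fin (d k)) (Fin (d k)) ℝ)
    (C : ∀ k, Fin (N k) → Matrix (Fin (d k)) (Fin (d k)) ℝ)
    (hA : ∀ k, (A k).IsSymm) (hB : ∀ k i, (B k i).IsSymm) (hCsym : ∀ k j, (C k j).IsSymm)
    (W : Fin m → Set (Rn n))
    (hW : ∀ k, W k = {x : Rn n | ∃ u : Fin (N k) → ℝ,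
        (A k + ∑ i, x i • B k i + ∑ j, u j • C k j).PosSemidef})
    (hne : ∀ k, (W k).Nonempty)
    (Cset : Set (Rn n))
    (hCset : Cset = {z : Rn n | ∃ xx : Fin m → Rn n, z = ∑ k, xx k ∧
        ∃ lam ∈ stdSimplex ℝ (Fin m), ∀ k, ∃ u : Fin (N k) → ℝ,
          (lam k • A k + ∑ i, xx k i • B k i + ∑ j, u j • C k j).PosSemidef})
    (hbd : ∀ k, Bornology.IsBounded (W k)) :
    Cset = convexHull ℝ (⋃ k, W k) := by
  apply Set.Subset.antisymm
  · -- Cset ⊆ convexHull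
    intro z hz
    rw [hCset] at hz
    obtain ⟨xx, hzsum, lam, hlam, hmat⟩ := hz
    choose u hu using hmat
    -- define y k ∈ W k with xx k = lam k • y k
    have key : ∀ k, ∃ y : Rn n, y ∈ W k ∧ xx k = lam k • y := by
      intro k
      rcases eq_or_lt_of_le (hlam.1 k) with h0 | hpos
      · -- lam k = 0 : recession direction, so xx k = 0
        have hxx0 : xx k = 0 := by
          apply recession_zero (A k) (B k) (C k) (W k) (hW k) (hbd k) (hne k) (xx k) (u k)
          have := hu k
          rw [← h0] at this
          simpa using this
        exact ⟨(hne k).some, (hne k).some_mem, by rw [hxx0, ← h0]; simp⟩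
      · -- lam k > 0 : rescale
        refine ⟨(lam k)⁻¹ • xx k, ?_, by rw [smul_smul, mul_inv_cancel₀ hpos.ne', one_smul]⟩
        rw [hW k]
        refine ⟨(lam k)⁻¹ • u k, ?_⟩
        have heq : A k + ∑ i, ((lam k)⁻¹ • xx k) i • B k i
              + ∑ j, ((lam k)⁻¹ • u k) j • C k j
            = (lam k)⁻¹ • (lam k • A k + ∑ i, xx k i • B k i + ∑ j, u k j • C k j) := by
          simp only [PiLp.smul_apply, Pi.smul_apply, smul_eq_mul, smul_add,
            Finset.smul_sum, smul_smul, inv_mul_cancel₀ hpos.ne', one_smul]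
        rw [heq]
        exact psd_smul (hu k) (inv_nonneg.mpr hpos.le)
    choose y hyW hxy using key
    have hz' : z = ∑ k, lam k • y k := by
      rw [hzsum]
      exact Finset.sum_congr rfl fun k _ => hxy k
    rw [hz']
    have := Finset.centerMass_mem_convexHull (Finset.univ : Finset (Fin m))
      (w := lam) (z := y) (fun k _ => hlam.1 k) (by rw [hlam.2]; norm_num)
      (fun k _ => Set.mem_iUnion.mpr ⟨k, hyW k⟩)
    rwa [Finset.centerMass_eq_of_sum_1 _ _ hlam.2] at this
  · -- convexHull ⊆ Cset
    apply convexHull_min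
    · -- ⋃ W k ⊆ Cset
      intro x hx
      obtain ⟨k₀, hk₀⟩ := Set.mem_iUnion.mp hx
      rw [hW k₀] at hk₀
      obtain ⟨u, hu⟩ := hk₀
      rw [hCset]
      classical
      refine ⟨fun j => if j = k₀ then x else 0, ?_, fun j => if k₀ = j then 1 else 0,
        ite_eq_mem_stdSimplex ℝ k₀, ?_⟩
      · simp
      · intro k
        by_cases hk : k = k₀
        · subst hk
          refine ⟨u, ?_⟩
          simpa using hu
        · refine ⟨0, ?_⟩
          simp only [if_neg hk, if_neg (Ne.symm hk), zero_smul, Pi.zero_apply, zero_add]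
          have h0 : ((0 : Rn n) : Fin n → ℝ) = 0 := rfl
          simp only [PiLp.zero_apply, zero_smul, Finset.sum_const_zero, add_zero]
          exact Matrix.PosSemidef.zero
    · -- Cset is convex
      rw [hCset]
      rintro p ⟨xp, hp, lamp, hlamp, hup⟩ q ⟨xq, hq, lamq, hlamq, huq⟩ a b ha hb hab
      choose up hup using hup
      choose uq huq using huq
      refine ⟨fun k => a • xp k + b • xq k, ?_, a • lamp + b • lamq,
        (convex_stdSimplex ℝ (Fin m)) hlamp hlamq ha hb hab, ?_⟩
      · rw [hp, hq] at *
        rw [Finset.sum_add_distrib, Finset.smul_sum, Finset.smul_sum]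
      · intro k
        refine ⟨fun j => a * up k j + b * uq k j, ?_⟩
        have heq : (a • lamp + b • lamq) k • A k
              + ∑ i, (a • xp k + b • xq k) i • B k i
              + ∑ j, (a * up k j + b * uq k j) • C k j
            = a • (lamp k • A k + ∑ i, xp k i • B k i + ∑ j, up k j • C k j)
              + b • (lamq k • A k + ∑ i, xq k i • B k i + ∑ j, uq k j • C k j) := by
          have := sdp_lin_comb (A k) (B k) (C k) a b (lamp k) (lamq k)
            (fun i => xp k i) (fun i => xq k i) (up k) (uq k)
          simpa [PiLp.add_apply, PiLp.smul_apply, Pi.add_apply, Pi.smul_apply,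
            smul_eq_mul] using this
        rw [heq]
        exact psd_add (psd_smul (hup k) ha) (psd_smul (huq k) hb)
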